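/- For any uncertainty frame F = ⟨W, μ⟩: F validates the formula disj+, i.e., (~_G B(p∧p') ∧ ~_G~_G Bp ∧ ~_G~_G Bp') →_G (~_G△(B(p∨p')→_G Bp) ∧ ~_G△(B(p∨p')→_G Bp')), if and only if for all Y, Y' ⊆ W: if μ(Y∩Y') = 0 and μ(Y) > 0 and μ(Y') > 0, then μ(Y∪Y') > μ(Y) and μ(Y∪Y') > μ(Y'). -/

import Mathlib

/-- Classical propositional formulas (over `~` and `∧`). -/
inductive CPForm : Type
  | atom : ℕ → CPForm
  | neg  : CPForm → CPForm
  | and  : CPForm → CPForm → CPForm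

/-- Boolean evaluation of classical formulas. -/
def cpeval (v : ℕ → Bool) : CPForm → Bool
  | .atom n => v n
  | .neg φ => !(cpeval v φ)
  | .and φ ψ => cpeval v φ && cpeval v ψ

/-- `φ` is a classical tautology. -/
def CPTaut (φ : CPForm) : Prop := ∀ v : ℕ → Bool, cpeval v φ = true

/-- The extension `‖φ‖` of a classical formula in a model with valuation `v`. -/
def cpset {W : Type} (v : ℕ → Set W) : CPForm → Set W
  | .atom n => v n
  | .neg φ => (cpset v φ)ᶜ
  | .and φ ψ => cpset v φ ∩ cpset v ψ

/-- Defined classical implication `φ ⊃ ψ := ~(φ ∧ ~ψ)`. -/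
def cpImp (φ ψ : CPForm) : CPForm := (φ.and ψ.neg).neg

/-- Defined classical disjunction `φ ∨ ψ := ~(~φ ∧ ~ψ)`. -/
def cpOr (φ ψ : CPForm) : CPForm := ((φ.neg).and ψ.neg).neg

/-- A classical contradiction `p ∧ ~p`. -/
def cpBot : CPForm := (CPForm.atom 0).and (CPForm.atom 0).neg

/-- A classical tautology `~(p ∧ ~p)`. -/
def cpTop : CPForm := cpBot.neg

/-- Formulas of the language `L_QG`: atoms `B φ` for classical `φ`,
closed under `∧`, `∨`, `→_G`, `⤙_G`. -/
inductive QGForm : Type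
  | bel   : CPForm → QGForm
  | and   : QGForm → QGForm → QGForm
  | or    : QGForm → QGForm → QGForm
  | imp   : QGForm → QGForm → QGForm
  | coimp : QGForm → QGForm → QGForm

/-- Gödel implication on `[0,1] ⊆ ℝ`. -/
noncomputable def gimp (a b : ℝ) : ℝ := if a ≤ b then 1 else b

/-- Gödel co-implication on `[0,1] ⊆ ℝ`. -/
noncomputable def gcoimp (a b : ℝ) : ℝ := if a ≤ b then 0 else a

/-- The bi-Gödel valuation of `L_QG` formulas in a QG model given by measure `μ`
and classical valuation `v`: `e(Bφ) = μ(‖φ‖)`. -/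
noncomputable def qgeval {W : Type} (μ : Set W → ℝ) (v : ℕ → Set W) : QGForm → ℝ
  | .bel φ => μ (cpset v φ)
  | .and α β => min (qgeval μ v α) (qgeval μ v β)
  | .or α β => max (qgeval μ v α) (qgeval μ v β)
  | .imp α β => gimp (qgeval μ v α) (qgeval μ v β)
  | .coimp α β => gcoimp (qgeval μ v α) (qgeval μ v β)

/-- `μ` is an uncertainty measure on `W`: `[0,1]`-valued, monotone w.r.t. `⊆`,
and `μ(W) > μ(∅)`. -/
def IsUncertainty {W : Type} (μ : Set W → ℝ) : Prop :=
  (∀ X : Set W, μ X ∈ Set.Icc (0:ℝ) 1) ∧ Monotone μ ∧ μ ∅ < μ Set.univ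

/-- `⊤_G` in `L_QG`. -/
def qTop : QGForm := (QGForm.bel (CPForm.atom 0)).imp (QGForm.bel (CPForm.atom 0))
/-- `⊥_G` in `L_QG`. -/
def qBot : QGForm := (QGForm.bel (CPForm.atom 0)).coimp (QGForm.bel (CPForm.atom 0))
/-- Gödel negation `~_G α := α →_G ⊥_G`. -/
def qNot (α : QGForm) : QGForm := α.imp qBot
/-- `△α := (⊤_G ⤙_G α) →_G ⊥_G`. -/
def qDelta (α : QGForm) : QGForm := (qTop.coimp α).imp qBot
/-- `α ↔_G β := (α →_G β) ∧ (β →_G α)`. -/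
def qIff (α β : QGForm) : QGForm := (α.imp β).and (β.imp α)

/-- Validity of an `L_QG` formula on an uncertainty frame `⟨W, μ⟩`:
value `1` in every QG model on the frame. -/
def QGValidOnFrame {W : Type} (μ : Set W → ℝ) (α : QGForm) : Prop :=
  ∀ v : ℕ → Set W, qgeval μ v α = 1

/-- The atom `p`. -/
def pa : CPForm := CPForm.atom 0
/-- The atom `p'`. -/
def pb : CPForm := CPForm.atom 1

/-- The formula `disj+`:
`(~_G B(p∧p') ∧ ~_G~_G Bp ∧ ~_G~_G Bp') →_G
 (~_G△(B(p∨p')→_G Bp) ∧ ~_G△(B(p∨p')→_G Bp'))`. -/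
def disjPlus : QGForm :=
  ((qNot (QGForm.bel (pa.and pb))).and
    ((qNot (qNot (QGForm.bel pa))).and (qNot (qNot (QGForm.bel pb))))).imp
  ((qNot (qDelta ((QGForm.bel (cpOr pa pb)).imp (QGForm.bel pa)))).and
    (qNot (qDelta ((QGForm.bel (cpOr pa pb)).imp (QGForm.bel pb)))))

/-!
Apart from the atoms, every subformula of `disj+` is crisp (`{0,1}`-valued): on `[0,1]`,
`~_G x` is `1` iff `x = 0`, `~_G~_G x` is `1` iff `x > 0`, and `~_G△(a →_G b)` is `1` iff
`a > b`. Hence `disj+` takes the value `1` in a model exactly when the crisp antecedent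
`μ(‖p‖ ∩ ‖p'‖) = 0 ∧ μ‖p‖ > 0 ∧ μ‖p'‖ > 0` implies the crisp consequent
`μ(‖p‖ ∪ ‖p'‖) > μ‖p‖ ∧ μ(‖p‖ ∪ ‖p'‖) > μ‖p'‖`, and `‖p‖, ‖p'‖` range over all pairs of subsets.
-/

lemma gimp_zero (a : ℝ) : gimp a 0 = if a ≤ 0 then 1 else 0 := rfl

lemma gimp_ite_eq_one_iff (P Q : Prop) [Decidable P] [Decidable Q] :
    gimp (if P then 1 else 0) (if Q then 1 else 0) = 1 ↔ (P → Q) := by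
  by_cases P <;> by_cases Q <;> simp [gimp, *]

lemma min_ite_one_zero (P Q : Prop) [Decidable P] [Decidable Q] :
    min (if P then (1 : ℝ) else 0) (if Q then 1 else 0) = if P ∧ Q then 1 else 0 := by
  split_ifs <;> simp_all

lemma one_le_gimp_iff {a b : ℝ} (ha : a ≤ 1) : 1 ≤ gimp a b ↔ a ≤ b := by
  unfold gimp
  split_ifs with hab
  · simp [hab]
  · constructor <;> intro h <;> linarith

lemma cpset_cpOr {W : Type} (v : ℕ → Set W) (φ ψ : CPForm) :
    cpset v (cpOr φ ψ) = cpset v φ ∪ cpset v ψ := by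
  simp [cpOr, cpset, Set.compl_inter]

section Evaluation

variable {W : Type} (μ : Set W → ℝ) (v : ℕ → Set W)

lemma qgeval_qBot : qgeval μ v qBot = 0 := by
  simp [qBot, qgeval, gcoimp]

lemma qgeval_qTop : qgeval μ v qTop = 1 := by
  simp [qTop, qgeval, gimp]

lemma qgeval_qNot (α : QGForm) :
    qgeval μ v (qNot α) = if qgeval μ v α ≤ 0 then 1 else 0 := by
  rw [qNot, qgeval, qgeval_qBot, gimp_zero]

lemma qgeval_qNot_qNot (α : QGForm) :
    qgeval μ v (qNot (qNot α)) = if 0 < qgeval μ v α then 1 else 0 := by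
  rw [qgeval_qNot, qgeval_qNot]
  split_ifs <;> first | rfl | (exfalso; linarith)

lemma qgeval_qDelta (α : QGForm) :
    qgeval μ v (qDelta α) = if 1 ≤ qgeval μ v α then 1 else 0 := by
  rw [qDelta, qgeval, qgeval, qgeval_qTop, qgeval_qBot, gimp_zero, gcoimp]
  split_ifs <;> first | rfl | (exfalso; linarith)

lemma qgeval_qNot_qDelta_imp (α β : QGForm) (hα : qgeval μ v α ≤ 1) :
    qgeval μ v (qNot (qDelta (α.imp β))) = if qgeval μ v β < qgeval μ v α then 1 else 0 := by
  rw [qgeval_qNot, qgeval_qDelta, qgeval]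
  simp only [one_le_gimp_iff hα]
  split_ifs <;> first | rfl | (exfalso; linarith)

lemma qgeval_disjPlus_eq_one_iff (hμ : ∀ X, μ X ≤ 1) :
    qgeval μ v disjPlus = 1 ↔
      (μ (v 0 ∩ v 1) ≤ 0 ∧ 0 < μ (v 0) ∧ 0 < μ (v 1) →
        μ (v 0) < μ (v 0 ∪ v 1) ∧ μ (v 1) < μ (v 0 ∪ v 1)) := by
  rw [disjPlus, qgeval, qgeval, qgeval, qgeval, qgeval_qNot, qgeval_qNot_qNot, qgeval_qNot_qNot,
    qgeval_qNot_qDelta_imp μ v (.bel (cpOr pa pb)) _ (hμ _),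
    qgeval_qNot_qDelta_imp μ v (.bel (cpOr pa pb)) _ (hμ _),
    min_ite_one_zero, min_ite_one_zero, min_ite_one_zero, gimp_ite_eq_one_iff]
  simp only [qgeval, cpset_cpOr, cpset, pa, pb]

end Evaluation

theorem disjPlus_correspondence_general (W : Type) (μ : Set W → ℝ)
    (hμ : IsUncertainty μ) :
    QGValidOnFrame μ disjPlus ↔
      ∀ Y Y' : Set W, μ (Y ∩ Y') = 0 → 0 < μ Y → 0 < μ Y' →
        μ Y < μ (Y ∪ Y') ∧ μ Y' < μ (Y ∪ Y') := by
  have hzero (X : Set W) : μ X ≤ 0 ↔ μ X = 0 := LE.le.ge_iff_eq' (hμ.1 X).1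
  simp only [QGValidOnFrame, qgeval_disjPlus_eq_one_iff μ _ (fun X => (hμ.1 X).2), hzero]
  constructor
  · intro h Y Y' h0 hY hY'
    exact h (fun n => if n = 0 then Y else Y') ⟨h0, hY, hY'⟩
  · exact fun h v ⟨h0, hY, hY'⟩ => h (v 0) (v 1) h0 hY hY'

/-- an uncertainty frame validates `disj+` iff for all `Y, Y' ⊆ W`:
if `μ(Y∩Y') = 0`, `μ(Y) > 0` and `μ(Y') > 0`, then `μ(Y∪Y') > μ(Y)` and
`μ(Y∪Y') > μ(Y')`. -/
theorem disjPlus_correspondence (W : Type) (_ : Nonempty W) (μ : Set W → ℝ)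
    (hμ : IsUncertainty μ) :
    QGValidOnFrame μ disjPlus ↔
      ∀ Y Y' : Set W, μ (Y ∩ Y') = 0 → 0 < μ Y → 0 < μ Y' →
        μ Y < μ (Y ∪ Y') ∧ μ Y' < μ (Y ∪ Y') :=
  disjPlus_correspondence_general W μ hμ
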